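/- Under Assumption 1, for any initial distribution p₀ ∈ P(𝓜) and any mutant distribution q ∈ P(𝓜): if p_i({M}) converges to p*({M}) as i → ∞, then (p_i)_{i≥0} converges in total variation to p*. -/

import Mathlib

open MeasureTheory Set Filter

/-- Selective advantage `s(x,u) = w(x,u) / ∫ w(y,u) u(dy)` if the mean fitness is
positive, and `1` otherwise. -/
noncomputable def sel (w : ℝ → MeasureTheory.Measure ℝ → ℝ)
    (u : MeasureTheory.Measure ℝ) (x : ℝ) : ℝ :=
  if 0 < ∫ y, w y u ∂u then w x u / ∫ y, w y u ∂u else 1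

/-- The sequence of type distributions:
`p_i(dx) = (1-β) s(x,p_{i-1}) p_{i-1}(dx) + β q(dx)`. -/
noncomputable def evol (w : ℝ → MeasureTheory.Measure ℝ → ℝ) (β : ℝ)
    (q p₀ : MeasureTheory.Measure ℝ) : ℕ → MeasureTheory.Measure ℝ
  | 0 => p₀
  | i + 1 =>
      ENNReal.ofReal (1 - β) •
          ((evol w β q p₀ i).withDensity fun x =>
            ENNReal.ofReal (sel w (evol w β q p₀ i) x))
        + ENNReal.ofReal β • q

/-- Convergence in total variation (uniform convergence over all measurable sets). -/
def TendstoTV (p : ℕ → MeasureTheory.Measure ℝ) (μ : MeasureTheory.Measure ℝ) : Prop :=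
  ∀ ε : ℝ, 0 < ε → ∃ N : ℕ, ∀ i ≥ N, ∀ A : Set ℝ, MeasurableSet A →
    |((p i) A).toReal - (μ A).toReal| < ε

/-- Weak convergence of measures (tested against bounded continuous functions). -/
def TendstoWeak (p : ℕ → MeasureTheory.Measure ℝ) (μ : MeasureTheory.Measure ℝ) : Prop :=
  ∀ f : BoundedContinuousFunction ℝ ℝ,
    Filter.Tendsto (fun i => ∫ x, f x ∂(p i)) Filter.atTop (nhds (∫ x, f x ∂μ))

/-- Assumption 1: if `v` restricted to `[0,M)` is a component of `u` restricted to `[0,M)`,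
then `s(·,u) ≥ s(·,v)` on `[0,M]`. -/
def Assumption1 (M : ℝ) (w : ℝ → MeasureTheory.Measure ℝ → ℝ) : Prop :=
  ∀ u v : MeasureTheory.Measure ℝ,
    IsProbabilityMeasure u → IsProbabilityMeasure v →
    u ((Set.Icc 0 M)ᶜ) = 0 → v ((Set.Icc 0 M)ᶜ) = 0 →
    v.restrict (Set.Ico 0 M) ≤ u.restrict (Set.Ico 0 M) →
    ∀ x ∈ Set.Icc (0:ℝ) M, sel w v x ≤ sel w u x

/-- Assumption 2: for every `0 ≤ a < M` and `0 < ε < 1` there is `c(a,ε) > 1` such that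
`s(M,u) ≥ c(a,ε) s(M,v)` whenever `v_{[0,M)} ≺ u_{[0,M)}` and `D_u(a) ≥ D_v(a) + ε`. -/
def Assumption2 (M : ℝ) (w : ℝ → MeasureTheory.Measure ℝ → ℝ) : Prop :=
  ∀ a : ℝ, 0 ≤ a → a < M → ∀ ε : ℝ, 0 < ε → ε < 1 → ∃ c : ℝ, 1 < c ∧
    ∀ u v : MeasureTheory.Measure ℝ,
      IsProbabilityMeasure u → IsProbabilityMeasure v →
      u ((Set.Icc 0 M)ᶜ) = 0 → v ((Set.Icc 0 M)ᶜ) = 0 →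
      v.restrict (Set.Ico 0 M) ≤ u.restrict (Set.Ico 0 M) →
      (v (Set.Icc 0 a)).toReal + ε ≤ (u (Set.Icc 0 a)).toReal →
      c * sel w v M ≤ sel w u M

open Topology

/-! Started from `δ_M`, the population carries the least possible mass on `[0,M)`: by
Assumption 1 a smaller mass on `[0,M)` means a smaller selective advantage everywhere, so the
ordering `p̂_i|[0,M) ≤ p_i|[0,M)` of `p̂₀ = δ_M` and `p₀` propagates through the recursion. For two
probability measures on `[0,M]` ordered this way, the difference of the masses they give to any
set is bounded by the difference `p̂_i{M} - p_i{M}` of their atoms at `M`, which tends to `0`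
since both sequences of atoms converge to `p*{M}`. -/

section TotalVariation

lemma TendstoTV.tendsto_measureReal {p : ℕ → Measure ℝ} {μ : Measure ℝ} (h : TendstoTV p μ)
    {A : Set ℝ} (hA : MeasurableSet A) :
    Tendsto (fun i => (p i).real A) atTop (𝓝 (μ.real A)) :=
  Metric.tendsto_atTop.2 fun ε hε =>
    (h ε hε).imp fun _ hN i hi => (Real.dist_eq _ _).trans_lt (hN i hi A hA)

lemma TendstoTV.of_abs_sub_le {p p' : ℕ → Measure ℝ} {μ : Measure ℝ} {d : ℕ → ℝ}
    (h : TendstoTV p μ) (hd : Tendsto d atTop (𝓝 0))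
    (hle : ∀ i A, MeasurableSet A → |(p' i).real A - (p i).real A| ≤ d i) :
    TendstoTV p' μ := by
  intro ε hε
  obtain ⟨N₁, hN₁⟩ := h (ε / 2) (half_pos hε)
  obtain ⟨N₂, hN₂⟩ := eventually_atTop.1 (hd.eventually (gt_mem_nhds (half_pos hε)))
  refine ⟨max N₁ N₂, fun i hi A hA => ?_⟩
  calc |(p' i A).toReal - (μ A).toReal|
      ≤ |(p' i).real A - (p i).real A| + |(p i A).toReal - (μ A).toReal| := abs_sub_le _ _ _
    _ < ε / 2 + ε / 2 :=
      add_lt_add_of_le_of_lt ((hle i A hA).trans (hN₂ i (le_of_max_le_right hi)).le)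
        (hN₁ i (le_of_max_le_left hi) A hA)
    _ = ε := add_halves ε

end TotalVariation

section Comparison

variable {M : ℝ} {μ ν : Measure ℝ}

lemma measure_le_of_restrict_Ico_le (hν : ν (Icc 0 M)ᶜ = 0)
    (hle : ν.restrict (Ico 0 M) ≤ μ.restrict (Ico 0 M)) {B : Set ℝ} (hB : MeasurableSet B)
    (hMB : M ∉ B) : ν B ≤ μ B := by
  have hBIco : B ∩ Icc 0 M ⊆ Ico 0 M := fun x ⟨hxB, hx0, hxM⟩ =>
    ⟨hx0, hxM.lt_of_ne fun hxM => hMB (hxM ▸ hxB)⟩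
  calc ν B = ν (B ∩ Icc 0 M) := (measure_inter_conull hν).symm
    _ ≤ ν (B ∩ Ico 0 M) := measure_mono (subset_inter inter_subset_left hBIco)
    _ = ν.restrict (Ico 0 M) B := (Measure.restrict_apply hB).symm
    _ ≤ μ.restrict (Ico 0 M) B := hle B
    _ ≤ μ B := Measure.restrict_apply_le _ _

lemma abs_measureReal_sub_le_of_restrict_Ico_le [IsProbabilityMeasure μ]
    [IsProbabilityMeasure ν] (hν : ν (Icc 0 M)ᶜ = 0)
    (hle : ν.restrict (Ico 0 M) ≤ μ.restrict (Ico 0 M)) {A : Set ℝ} (hA : MeasurableSet A) :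
    |μ.real A - ν.real A| ≤ ν.real {M} - μ.real {M} := by
  wlog hMA : M ∉ A generalizing A with H
  · have := H hA.compl hMA
    rwa [probReal_compl_eq_one_sub hA, probReal_compl_eq_one_sub hA, ← abs_neg,
      show -(1 - μ.real A - (1 - ν.real A)) = μ.real A - ν.real A by ring] at this
  have hA_le : ν.real A ≤ μ.real A := ENNReal.toReal_mono (measure_ne_top _ _)
    (measure_le_of_restrict_Ico_le hν hle hA hMA)
  have hAM_le : ν.real (A ∪ {M})ᶜ ≤ μ.real (A ∪ {M})ᶜ := ENNReal.toReal_mono (measure_ne_top _ _)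
    (measure_le_of_restrict_Ico_le hν hle (hA.union (measurableSet_singleton M)).compl
      (by simp))
  have hdisj : Disjoint A {M} := disjoint_singleton_right.2 hMA
  rw [probReal_compl_eq_one_sub (hA.union (measurableSet_singleton M)),
    probReal_compl_eq_one_sub (hA.union (measurableSet_singleton M)),
    measureReal_union hdisj (measurableSet_singleton M),
    measureReal_union hdisj (measurableSet_singleton M)] at hAM_le
  rw [abs_le]
  constructor <;> linarith

end Comparison

section Evolution

variable {w : ℝ → Measure ℝ → ℝ} {β : ℝ} {q : Measure ℝ}

lemma lintegral_ofReal_sel (hw : ∀ x u, 0 ≤ w x u) (u : Measure ℝ) [IsProbabilityMeasure u] :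
    ∫⁻ x, ENNReal.ofReal (sel w u x) ∂u = 1 := by
  by_cases h : 0 < ∫ y, w y u ∂u
  · have hint : Integrable (fun y => w y u) u := Integrable.of_integral_ne_zero h.ne'
    have hI : ENNReal.ofReal (∫ y, w y u ∂u) ≠ 0 := (ENNReal.ofReal_pos.2 h).ne'
    simp only [sel, if_pos h, ENNReal.ofReal_div_of_pos h]
    simp only [div_eq_mul_inv]
    rw [lintegral_mul_const' _ _ (ENNReal.inv_ne_top.2 hI),
      ← ofReal_integral_eq_lintegral_ofReal hint (ae_of_all _ (hw · u)),
      ENNReal.mul_inv_cancel hI ENNReal.ofReal_ne_top]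
  · simp [sel, h]

lemma evol_succ_apply (p₀ : Measure ℝ) (i : ℕ) {s : Set ℝ} (hs : MeasurableSet s) :
    evol w β q p₀ (i + 1) s =
      ENNReal.ofReal (1 - β) *
          ∫⁻ x in s, ENNReal.ofReal (sel w (evol w β q p₀ i) x) ∂(evol w β q p₀ i)
        + ENNReal.ofReal β * q s := by
  rw [evol, Measure.add_apply, Measure.smul_apply, Measure.smul_apply, smul_eq_mul, smul_eq_mul,
    withDensity_apply _ hs]

lemma isProbabilityMeasure_evol (hβ₀ : 0 ≤ β) (hβ₁ : β ≤ 1) [IsProbabilityMeasure q]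
    (hw : ∀ x u, 0 ≤ w x u) (p₀ : Measure ℝ) [IsProbabilityMeasure p₀] :
    ∀ i, IsProbabilityMeasure (evol w β q p₀ i)
  | 0 => ‹_›
  | i + 1 => by
    have := isProbabilityMeasure_evol hβ₀ hβ₁ hw p₀ i
    constructor
    rw [evol_succ_apply p₀ i MeasurableSet.univ, Measure.restrict_univ, lintegral_ofReal_sel hw,
      measure_univ, mul_one, mul_one, ← ENNReal.ofReal_add (by linarith) hβ₀]
    norm_num

lemma evol_compl_Icc_eq_zero {M : ℝ} (hq : q (Icc 0 M)ᶜ = 0) {p₀ : Measure ℝ}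
    (hp₀ : p₀ (Icc 0 M)ᶜ = 0) : ∀ i, evol w β q p₀ i (Icc 0 M)ᶜ = 0
  | 0 => hp₀
  | i + 1 => by
    rw [evol_succ_apply p₀ i measurableSet_Icc.compl,
      Measure.restrict_eq_zero.2 (evol_compl_Icc_eq_zero hq hp₀ i), lintegral_zero_measure, hq]
    simp

lemma restrict_Ico_evol_mono {M : ℝ} (hβ₀ : 0 ≤ β) (hβ₁ : β ≤ 1) [IsProbabilityMeasure q]
    (hq : q (Icc 0 M)ᶜ = 0) (hw : ∀ x u, 0 ≤ w x u) (hA1 : Assumption1 M w)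
    {p₀ p₀' : Measure ℝ} [IsProbabilityMeasure p₀] [IsProbabilityMeasure p₀']
    (hp₀ : p₀ (Icc 0 M)ᶜ = 0) (hp₀' : p₀' (Icc 0 M)ᶜ = 0)
    (hle : p₀'.restrict (Ico 0 M) ≤ p₀.restrict (Ico 0 M)) :
    ∀ i, (evol w β q p₀' i).restrict (Ico 0 M) ≤ (evol w β q p₀ i).restrict (Ico 0 M)
  | 0 => hle
  | i + 1 => by
    set p := evol w β q p₀ i
    set p' := evol w β q p₀' i
    have ih : p'.restrict (Ico 0 M) ≤ p.restrict (Ico 0 M) :=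
      restrict_Ico_evol_mono hβ₀ hβ₁ hq hw hA1 hp₀ hp₀' hle i
    have hsel : ∀ x ∈ Icc 0 M, sel w p' x ≤ sel w p x :=
      hA1 p p' (isProbabilityMeasure_evol hβ₀ hβ₁ hw p₀ i)
        (isProbabilityMeasure_evol hβ₀ hβ₁ hw p₀' i) (evol_compl_Icc_eq_zero hq hp₀ i)
        (evol_compl_Icc_eq_zero hq hp₀' i) ih
    refine Measure.le_iff.2 fun s hs => ?_
    have hsI : MeasurableSet (s ∩ Ico 0 M) := hs.inter measurableSet_Ico
    rw [Measure.restrict_apply hs, Measure.restrict_apply hs, evol_succ_apply _ _ hsI,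
      evol_succ_apply _ _ hsI]
    gcongr _ * ?_ + _
    calc ∫⁻ x in s ∩ Ico 0 M, ENNReal.ofReal (sel w p' x) ∂p'
        ≤ ∫⁻ x in s ∩ Ico 0 M, ENNReal.ofReal (sel w p x) ∂p' :=
          setLIntegral_mono' hsI fun x hx =>
            ENNReal.ofReal_le_ofReal (hsel x (Ico_subset_Icc_self hx.2))
      _ ≤ ∫⁻ x in s ∩ Ico 0 M, ENNReal.ofReal (sel w p x) ∂p := by
          refine lintegral_mono' ?_ le_rfl
          rw [← Measure.restrict_restrict hs, ← Measure.restrict_restrict hs]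
          exact Measure.restrict_mono subset_rfl ih

end Evolution

theorem stmt7_general (M : ℝ) (hM : 0 < M) (β : ℝ) (hβ : β ∈ Set.Ioo (0:ℝ) 1)
    (q : MeasureTheory.Measure ℝ) [IsProbabilityMeasure q] (hq : q ((Set.Icc 0 M)ᶜ) = 0)
    (w : ℝ → MeasureTheory.Measure ℝ → ℝ)
    (hw_nonneg : ∀ x u, 0 ≤ w x u)
    (hA1 : Assumption1 M w)
    (pstar : MeasureTheory.Measure ℝ) [IsProbabilityMeasure pstar]
    (hpstar : TendstoTV (evol w β q (MeasureTheory.Measure.dirac M)) pstar)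
    (p₀ : MeasureTheory.Measure ℝ) [IsProbabilityMeasure p₀]
    (hp₀ : p₀ ((Set.Icc 0 M)ᶜ) = 0)
    (hconv : Filter.Tendsto (fun i => (evol w β q p₀ i) ({M} : Set ℝ)) Filter.atTop
      (nhds (pstar ({M} : Set ℝ)))) :
    TendstoTV (evol w β q p₀) pstar := by
  have hdirac : Measure.dirac M (Icc 0 M)ᶜ = 0 := by simp [hM.le]
  have hle (i : ℕ) : (evol w β q (Measure.dirac M) i).restrict (Ico 0 M)
      ≤ (evol w β q p₀ i).restrict (Ico 0 M) :=
    restrict_Ico_evol_mono hβ.1.le hβ.2.le hq hw_nonneg hA1 hp₀ hdirac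
      (by rw [Measure.restrict_eq_zero.2 (by simp)]; exact Measure.zero_le _) i
  refine hpstar.of_abs_sub_le (d := fun i =>
    (evol w β q (Measure.dirac M) i).real {M} - (evol w β q p₀ i).real {M}) ?_ fun i A hA => ?_
  · have hconv' : Tendsto (fun i => (evol w β q p₀ i).real {M}) atTop (𝓝 (pstar.real {M})) :=
      (ENNReal.tendsto_toReal (measure_ne_top pstar {M})).comp hconv
    simpa only [sub_self] using
      (hpstar.tendsto_measureReal (measurableSet_singleton M)).sub hconv'
  · have : IsProbabilityMeasure (evol w β q p₀ i) :=
      isProbabilityMeasure_evol hβ.1.le hβ.2.le hw_nonneg p₀ i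
    have : IsProbabilityMeasure (evol w β q (Measure.dirac M) i) :=
      isProbabilityMeasure_evol hβ.1.le hβ.2.le hw_nonneg _ i
    exact abs_measureReal_sub_le_of_restrict_Ico_le (evol_compl_Icc_eq_zero hq hdirac i) (hle i) hA

/-- Proposition 4 of the paper. Under Assumption 1, for any `p₀`, `q`:
if `p_i({M}) → p*({M})`, then `(p_i)` converges in total variation to `p*`. -/
theorem stmt7 (M : ℝ) (hM : 0 < M) (β : ℝ) (hβ : β ∈ Set.Ioo (0:ℝ) 1)
    (q : MeasureTheory.Measure ℝ) [IsProbabilityMeasure q] (hq : q ((Set.Icc 0 M)ᶜ) = 0)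
    (w : ℝ → MeasureTheory.Measure ℝ → ℝ)
    (hw_nonneg : ∀ x u, 0 ≤ w x u)
    (hw_meas : ∀ u, Measurable fun x => w x u)
    (hA1 : Assumption1 M w)
    (pstar : MeasureTheory.Measure ℝ) [IsProbabilityMeasure pstar]
    (hpstar : TendstoTV (evol w β q (MeasureTheory.Measure.dirac M)) pstar)
    (p₀ : MeasureTheory.Measure ℝ) [IsProbabilityMeasure p₀]
    (hp₀ : p₀ ((Set.Icc 0 M)ᶜ) = 0)
    (hconv : Filter.Tendsto (fun i => (evol w β q p₀ i) ({M} : Set ℝ)) Filter.atTop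
      (nhds (pstar ({M} : Set ℝ)))) :
    TendstoTV (evol w β q p₀) pstar :=
  stmt7_general M hM β hβ q hq w hw_nonneg hA1 pstar hpstar p₀ hp₀ hconv
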